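/- Define p_h(x | x₀) = φ(x)[1 − exp(−(h−x)(h−x₀))] for x < h and p_h(x | x₀) = 0 for x ≥ h, where φ is the standard normal density and Φ the standard normal distribution function. Then for any x₀ < h, ∫_{−∞}^{h} p_h(x | x₀) dx = ∫_{−∞}^{h} φ(x)[1 − e^{−(h−x)(h−x₀)}] dx = Φ(h) − e^{x₀²/2 − h²/2} Φ(x₀). -/

import Mathlib

open MeasureTheory Set

/-- Standard normal density. -/
noncomputable def stdGaussPDF (x : ℝ) : ℝ :=
  (Real.sqrt (2 * Real.pi))⁻¹ * Real.exp (-x ^ 2 / 2)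

/-- Standard normal c.d.f. `Φ`. -/
noncomputable def stdGaussCDF (t : ℝ) : ℝ := ∫ x in Set.Iic t, stdGaussPDF x

lemma stdGaussPDF_integrable : Integrable stdGaussPDF := by
  have : Integrable (fun x : ℝ => Real.exp (-(1/2) * x ^ 2)) :=
    integrable_exp_neg_mul_sq (by norm_num)
  have h2 : stdGaussPDF = fun x => (Real.sqrt (2 * Real.pi))⁻¹ *
      Real.exp (-(1/2) * x ^ 2) := by
    funext x; unfold stdGaussPDF; ring_nf
  rw [h2]
  exact this.const_mul _

/-- Total mass of the kernel `p_h(x | x₀) = φ(x)(1 − e^{−(h−x)(h−x₀)})` on `(−∞, h)`: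
`∫_{−∞}^{h} φ(x)(1 − e^{−(h−x)(h−x₀)}) dx = Φ(h) − e^{(x₀² − h²)/2} Φ(x₀)`. -/
theorem kernel_total_mass (h x₀ : ℝ) (hx₀ : x₀ < h) :
    ∫ x in Set.Iic h, stdGaussPDF x * (1 - Real.exp (-(h - x) * (h - x₀)))
      = stdGaussCDF h - Real.exp ((x₀ ^ 2 - h ^ 2) / 2) * stdGaussCDF x₀ := by
  set c := h - x₀ with hc
  set C := Real.exp ((x₀ ^ 2 - h ^ 2) / 2) with hC
  have key : ∀ x : ℝ, stdGaussPDF x * (1 - Real.exp (-(h - x) * (h - x₀)))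
      = stdGaussPDF x - C * stdGaussPDF (x - c) := by
    intro x
    unfold stdGaussPDF
    rw [hC, hc]
    rw [mul_sub, mul_one]
    congr 1
    rw [mul_assoc, ← Real.exp_add, mul_comm (Real.exp _), mul_assoc, ← Real.exp_add]
    congr 1
    ring
  simp only [← hc] at key
  simp only [key]
  have hint1 : IntegrableOn stdGaussPDF (Set.Iic h) := stdGaussPDF_integrable.integrableOn
  have hint2 : IntegrableOn (fun x => C * stdGaussPDF (x - c)) (Set.Iic h) :=
    (((stdGaussPDF_integrable.comp_sub_right c)).const_mul C).integrableOn
  rw [integral_sub hint1 hint2, integral_const_mul]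
  have htrans : ∫ x in Set.Iic h, stdGaussPDF (x - c) = stdGaussCDF x₀ := by
    have hmp : MeasurePreserving (fun x : ℝ => x - c) volume volume :=
      measurePreserving_sub_right volume c
    have hemb : MeasurableEmbedding (fun x : ℝ => x - c) :=
      (MeasurableEquiv.subRight c).measurableEmbedding
    have hpre : (fun x : ℝ => x - c) ⁻¹' Set.Iic (h - c) = Set.Iic h := by
      ext x; simp [sub_le_sub_iff_right]
    rw [← hpre, hmp.setIntegral_preimage_emb hemb stdGaussPDF (Set.Iic (h - c))]
    have : h - c = x₀ := by rw [hc]; ring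
    rw [this]; rfl
  rw [htrans]; rfl
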